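/- arXiv:1908.00033 — 6 statements merged into one kernel-verified Lean document; each statement's English description precedes it below -/
import Mathlib

section
/- Let k be an even nonzero integer and R ∈ (0,∞]. A function Q : B_R \ {0} → S_0 satisfies the k-fold SO(2)-equivariance Q(x) = R_k(ψ)ᵗ Q(P₂(R₂(ψ) x̃)) R_k(ψ) for every ψ ∈ [0,2π) and every x ∈ B_R \ {0} if and only if there exist functions w₀, w₁, w₂, w₃, w₄ : (0,R) → ℝ such that Q(x) = w₀(|x|)E₀ + w₁(|x|)E₁(x) + w₂(|x|)E₂(x) + w₃(|x|)E₃(x) + w₄(|x|)E₄(x) for every x ∈ B_R \ {0}; moreover in that case w_i(|x|) = Q(x)·E_i(x). -/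
noncomputable section

open Matrix
open scoped ENNReal NNReal

namespace LdGStmt0

abbrev M3 : Type := Matrix (Fin 3) (Fin 3) ℝ

/-- The vector `e₃ = (0,0,1)`. -/
def e3 : Fin 3 → ℝ := ![0, 0, 1]

/-- `n(x) = (cos(kφ/2), sin(kφ/2), 0)` as a function of the polar angle `φ`. -/
def nvec (k : ℤ) (φ : ℝ) : Fin 3 → ℝ :=
  ![Real.cos ((k : ℝ) * φ / 2), Real.sin ((k : ℝ) * φ / 2), 0]

/-- `m(x) = (−sin(kφ/2), cos(kφ/2), 0)` as a function of the polar angle `φ`. -/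
def mvec (k : ℤ) (φ : ℝ) : Fin 3 → ℝ :=
  ![-Real.sin ((k : ℝ) * φ / 2), Real.cos ((k : ℝ) * φ / 2), 0]

/-- `I₂ = I₃ − e₃ ⊗ e₃`. -/
def I2 : M3 := 1 - vecMulVec e3 e3

/-- `E₀ = √(3/2) (e₃⊗e₃ − I₃/3)`. -/
def E0 : M3 := Real.sqrt (3 / 2) • (vecMulVec e3 e3 - (1 / 3 : ℝ) • (1 : M3))

/-- `E₁ = √2 (n⊗n − I₂/2)`. -/
def E1 (k : ℤ) (φ : ℝ) : M3 :=
  Real.sqrt 2 • (vecMulVec (nvec k φ) (nvec k φ) - (1 / 2 : ℝ) • I2)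

/-- `E₂ = (1/√2)(n⊗m + m⊗n)`. -/
def E2 (k : ℤ) (φ : ℝ) : M3 :=
  (1 / Real.sqrt 2) • (vecMulVec (nvec k φ) (mvec k φ) + vecMulVec (mvec k φ) (nvec k φ))

/-- `E₃ = (1/√2)(n⊗e₃ + e₃⊗n)`. -/
def E3m (k : ℤ) (φ : ℝ) : M3 :=
  (1 / Real.sqrt 2) • (vecMulVec (nvec k φ) e3 + vecMulVec e3 (nvec k φ))

/-- `E₄ = (1/√2)(m⊗e₃ + e₃⊗m)`. -/
def E4m (k : ℤ) (φ : ℝ) : M3 :=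
  (1 / Real.sqrt 2) • (vecMulVec (mvec k φ) e3 + vecMulVec e3 (mvec k φ))

/-- The rotation `R_k(ψ)` about `e₃` by angle `kψ/2`. -/
def Rk (k : ℤ) (ψ : ℝ) : M3 :=
  !![Real.cos ((k : ℝ) * ψ / 2), -Real.sin ((k : ℝ) * ψ / 2), 0;
     Real.sin ((k : ℝ) * ψ / 2),  Real.cos ((k : ℝ) * ψ / 2), 0;
     0, 0, 1]

/-- `x̃ = (x₁, x₂, 0)`, identifying the plane with `ℂ`. -/
def toR3 (x : ℂ) : Fin 3 → ℝ := ![x.re, x.im, 0]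

/-- `P₂(x₁,x₂,x₃) = (x₁,x₂)`, identifying the plane with `ℂ`. -/
def P2 (v : Fin 3 → ℝ) : ℂ := (v 0 : ℂ) + (v 1 : ℂ) * Complex.I

/-!
Conjugation by `R_k(ψ)` turns the frame `E_i(φ)` into `E_i(φ + ψ)`, while
`P₂(R₂(ψ) x̃) = e^{iψ} x`. Hence equivariance forces `Q(r e^{iφ}) = R_k(φ) Q(r) R_k(φ)ᵗ`;
expanding the symmetric traceless matrix `Q(r)` in the orthonormal frame `E_i(0)` and conjugating
gives the claimed form with `w_i(r) = Q(r)·E_i(0)`. Conversely the form is equivariant by the same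
conjugation identity. Since `k` is even, `R_k` and the frame are `2π`-periodic, so all angles may
be reduced to `[0, 2π)`.
-/

open Real

theorem _root_.Function.Periodic.apply_toIcoMod {α β : Type*} [AddCommGroup α] [LinearOrder α]
    [IsOrderedAddMonoid α] [Archimedean α] {f : α → β} {p : α} (h : Function.Periodic f p)
    (hp : 0 < p) (a x : α) : f (toIcoMod hp a x) = f x := by
  rw [← self_sub_toIcoDiv_zsmul, h.sub_zsmul_eq]

theorem _root_.Matrix.mul_vecMulVec_mul_transpose {l m α : Type*} [Fintype m]
    [CommSemiring α] (M : Matrix l m α) (u v : m → α) :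
    M * vecMulVec u v * Mᵀ = vecMulVec (M *ᵥ u) (M *ᵥ v) := by
  rw [mul_vecMulVec, vecMulVec_mul, vecMul_transpose]

theorem _root_.Matrix.trace_conj_mul_conj {n α : Type*} [Fintype n] [DecidableEq n]
    [CommSemiring α] {M : Matrix n n α} (hM : Mᵀ * M = 1) (A B : Matrix n n α) :
    (M * A * Mᵀ * (M * B * Mᵀ)).trace = (A * B).trace := by
  have : M * A * Mᵀ * (M * B * Mᵀ) = M * (A * B * Mᵀ) := by
    simp only [Matrix.mul_assoc, ← Matrix.mul_assoc Mᵀ M, hM, Matrix.one_mul]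
  rw [this, trace_mul_comm, Matrix.mul_assoc, hM, Matrix.mul_one]

theorem exp_mul_I_periodic :
    Function.Periodic (fun θ : ℝ => Complex.exp (θ * Complex.I)) (2 * π) := by
  intro θ
  simp only [Complex.ofReal_add, Complex.ofReal_mul, add_mul, Complex.ofReal_ofNat]
  exact Complex.exp_periodic _

theorem Rk_zero (k : ℤ) : Rk k 0 = 1 := by
  ext i j; fin_cases i <;> fin_cases j <;> simp [Rk]

theorem Rk_add (k : ℤ) (a b : ℝ) : Rk k (a + b) = Rk k a * Rk k b := by
  have h : (k : ℝ) * (a + b) / 2 = (k : ℝ) * a / 2 + (k : ℝ) * b / 2 := by ring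
  ext i j
  fin_cases i <;> fin_cases j <;>
    simp [Rk, Matrix.mul_apply, Fin.sum_univ_three, h, cos_add, sin_add] <;> ring

theorem transpose_Rk (k : ℤ) (ψ : ℝ) : (Rk k ψ)ᵀ = Rk k (-ψ) := by
  ext i j
  fin_cases i <;> fin_cases j <;> simp [Rk, neg_div]

theorem Rk_mul_transpose (k : ℤ) (ψ : ℝ) : Rk k ψ * (Rk k ψ)ᵀ = 1 := by
  rw [transpose_Rk, ← Rk_add, add_neg_cancel, Rk_zero]

theorem transpose_mul_Rk (k : ℤ) (ψ : ℝ) : (Rk k ψ)ᵀ * Rk k ψ = 1 := by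
  rw [transpose_Rk, ← Rk_add, neg_add_cancel, Rk_zero]

theorem Rk_periodic {k : ℤ} (hk : Even k) : Function.Periodic (Rk k) (2 * π) := by
  obtain ⟨m, rfl⟩ := hk
  intro ψ
  have h : ((m + m : ℤ) : ℝ) * (ψ + 2 * π) / 2 = ((m + m : ℤ) : ℝ) * ψ / 2 + m * (2 * π) := by
    push_cast; ring
  simp only [Rk, h, cos_add_int_mul_two_pi, sin_add_int_mul_two_pi]

theorem Rk_mulVec_nvec (k : ℤ) (ψ φ : ℝ) : Rk k ψ *ᵥ nvec k φ = nvec k (φ + ψ) := by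
  have h : (k : ℝ) * (φ + ψ) / 2 = (k : ℝ) * φ / 2 + (k : ℝ) * ψ / 2 := by ring
  ext i
  fin_cases i <;>
    simp [Rk, nvec, Matrix.mulVec, dotProduct, Fin.sum_univ_three, h, cos_add, sin_add] <;> ring

theorem Rk_mulVec_mvec (k : ℤ) (ψ φ : ℝ) : Rk k ψ *ᵥ mvec k φ = mvec k (φ + ψ) := by
  have h : (k : ℝ) * (φ + ψ) / 2 = (k : ℝ) * φ / 2 + (k : ℝ) * ψ / 2 := by ring
  ext i
  fin_cases i <;>
    simp [Rk, mvec, Matrix.mulVec, dotProduct, Fin.sum_univ_three, h, cos_add, sin_add] <;> ring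

theorem Rk_mulVec_e3 (k : ℤ) (ψ : ℝ) : Rk k ψ *ᵥ e3 = e3 := by
  ext i
  fin_cases i <;> simp [Rk, e3, Matrix.mulVec, dotProduct, Fin.sum_univ_three]

theorem P2_Rk_two_mulVec_toR3 (ψ : ℝ) (x : ℂ) :
    P2 (Rk 2 ψ *ᵥ toR3 x) = Complex.exp (ψ * Complex.I) * x := by
  apply Complex.ext <;>
    simp [P2, Rk, toR3, Matrix.mulVec, dotProduct, Fin.sum_univ_three, Complex.exp_mul_I,
      ← Complex.ofReal_cos, ← Complex.ofReal_sin] <;> ring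

theorem I2_conj_Rk (k : ℤ) (ψ : ℝ) : Rk k ψ * I2 * (Rk k ψ)ᵀ = I2 := by
  rw [I2, Matrix.mul_sub, Matrix.sub_mul, mul_vecMulVec_mul_transpose, Rk_mulVec_e3, mul_one,
    Rk_mul_transpose]

theorem E0_conj_Rk (k : ℤ) (ψ : ℝ) : Rk k ψ * E0 * (Rk k ψ)ᵀ = E0 := by
  simp only [E0, Matrix.mul_smul, Matrix.smul_mul, Matrix.mul_sub, Matrix.sub_mul, mul_one,
    Rk_mul_transpose, mul_vecMulVec_mul_transpose, Rk_mulVec_e3]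

theorem E1_conj_Rk (k : ℤ) (ψ φ : ℝ) : Rk k ψ * E1 k φ * (Rk k ψ)ᵀ = E1 k (φ + ψ) := by
  simp only [E1, Matrix.mul_smul, Matrix.smul_mul, Matrix.mul_sub, Matrix.sub_mul,
    mul_vecMulVec_mul_transpose, Rk_mulVec_nvec, I2_conj_Rk]

theorem E2_conj_Rk (k : ℤ) (ψ φ : ℝ) : Rk k ψ * E2 k φ * (Rk k ψ)ᵀ = E2 k (φ + ψ) := by
  simp only [E2, Matrix.mul_smul, Matrix.smul_mul, Matrix.mul_add, Matrix.add_mul,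
    mul_vecMulVec_mul_transpose, Rk_mulVec_nvec, Rk_mulVec_mvec]

theorem E3m_conj_Rk (k : ℤ) (ψ φ : ℝ) : Rk k ψ * E3m k φ * (Rk k ψ)ᵀ = E3m k (φ + ψ) := by
  simp only [E3m, Matrix.mul_smul, Matrix.smul_mul, Matrix.mul_add, Matrix.add_mul,
    mul_vecMulVec_mul_transpose, Rk_mulVec_nvec, Rk_mulVec_e3]

theorem E4m_conj_Rk (k : ℤ) (ψ φ : ℝ) : Rk k ψ * E4m k φ * (Rk k ψ)ᵀ = E4m k (φ + ψ) := by
  simp only [E4m, Matrix.mul_smul, Matrix.smul_mul, Matrix.mul_add, Matrix.add_mul,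
    mul_vecMulVec_mul_transpose, Rk_mulVec_mvec, Rk_mulVec_e3]

def frameComb (k : ℤ) (φ w₀ w₁ w₂ w₃ w₄ : ℝ) : M3 :=
  w₀ • E0 + w₁ • E1 k φ + w₂ • E2 k φ + w₃ • E3m k φ + w₄ • E4m k φ

theorem frameComb_conj_Rk (k : ℤ) (ψ φ w₀ w₁ w₂ w₃ w₄ : ℝ) :
    Rk k ψ * frameComb k φ w₀ w₁ w₂ w₃ w₄ * (Rk k ψ)ᵀ = frameComb k (φ + ψ) w₀ w₁ w₂ w₃ w₄ := by
  simp only [frameComb, Matrix.mul_add, Matrix.add_mul, Matrix.mul_smul, Matrix.smul_mul,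
    E0_conj_Rk, E1_conj_Rk, E2_conj_Rk, E3m_conj_Rk, E4m_conj_Rk]

theorem frameComb_eq_conj_zero (k : ℤ) (φ w₀ w₁ w₂ w₃ w₄ : ℝ) :
    frameComb k φ w₀ w₁ w₂ w₃ w₄ = Rk k φ * frameComb k 0 w₀ w₁ w₂ w₃ w₄ * (Rk k φ)ᵀ := by
  rw [frameComb_conj_Rk, zero_add]

theorem frameComb_periodic {k : ℤ} (hk : Even k) (w₀ w₁ w₂ w₃ w₄ : ℝ) :
    Function.Periodic (fun φ => frameComb k φ w₀ w₁ w₂ w₃ w₄) (2 * π) := by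
  intro φ
  dsimp only
  rw [frameComb_eq_conj_zero k (φ + 2 * π), Rk_periodic hk φ, ← frameComb_eq_conj_zero]

theorem nvec_zero (k : ℤ) : nvec k 0 = ![1, 0, 0] := by simp [nvec]

theorem mvec_zero (k : ℤ) : mvec k 0 = ![0, 1, 0] := by simp [mvec]

theorem eq_frameComb_zero_of_traceless_symm (k : ℤ) {A : M3} (hA : Aᵀ = A)
    (htr : A.trace = 0) :
    A = frameComb k 0 (A * E0).trace (A * E1 k 0).trace (A * E2 k 0).trace
      (A * E3m k 0).trace (A * E4m k 0).trace := by
  have h10 : A 1 0 = A 0 1 := congrFun (congrFun hA 0) 1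
  have h20 : A 2 0 = A 0 2 := congrFun (congrFun hA 0) 2
  have h21 : A 2 1 = A 1 2 := congrFun (congrFun hA 1) 2
  have htr' : A 0 0 + A 1 1 + A 2 2 = 0 := by simpa [Matrix.trace_fin_three] using htr
  ext i j
  fin_cases i <;> fin_cases j <;>
    simp [frameComb, E0, E1, E2, E3m, E4m, I2, e3, nvec_zero, mvec_zero, Matrix.trace_fin_three,
      Matrix.mul_apply, Fin.sum_univ_three, Matrix.one_apply] <;>
    ring_nf <;> simp only [inv_pow, sq_sqrt zero_le_two, sq_sqrt zero_le_three] <;> linarith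

theorem trace_frameComb_zero_mul (k : ℤ) (w₀ w₁ w₂ w₃ w₄ : ℝ) :
    (frameComb k 0 w₀ w₁ w₂ w₃ w₄ * E0).trace = w₀ ∧
    (frameComb k 0 w₀ w₁ w₂ w₃ w₄ * E1 k 0).trace = w₁ ∧
    (frameComb k 0 w₀ w₁ w₂ w₃ w₄ * E2 k 0).trace = w₂ ∧
    (frameComb k 0 w₀ w₁ w₂ w₃ w₄ * E3m k 0).trace = w₃ ∧
    (frameComb k 0 w₀ w₁ w₂ w₃ w₄ * E4m k 0).trace = w₄ := by
  refine ⟨?_, ?_, ?_, ?_, ?_⟩ <;>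
    simp [frameComb, E0, E1, E2, E3m, E4m, I2, e3, nvec_zero, mvec_zero, Matrix.trace_fin_three,
      Matrix.mul_apply, Fin.sum_univ_three, Matrix.one_apply] <;>
    ring_nf <;> simp only [inv_pow, sq_sqrt zero_le_two, sq_sqrt zero_le_three] <;> linarith

theorem trace_frameComb_mul (k : ℤ) (φ w₀ w₁ w₂ w₃ w₄ : ℝ) :
    (frameComb k φ w₀ w₁ w₂ w₃ w₄ * E0).trace = w₀ ∧
    (frameComb k φ w₀ w₁ w₂ w₃ w₄ * E1 k φ).trace = w₁ ∧
    (frameComb k φ w₀ w₁ w₂ w₃ w₄ * E2 k φ).trace = w₂ ∧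
    (frameComb k φ w₀ w₁ w₂ w₃ w₄ * E3m k φ).trace = w₃ ∧
    (frameComb k φ w₀ w₁ w₂ w₃ w₄ * E4m k φ).trace = w₄ := by
  obtain ⟨h₀, h₁, h₂, h₃, h₄⟩ := trace_frameComb_zero_mul k w₀ w₁ w₂ w₃ w₄
  rw [← trace_conj_mul_conj (transpose_mul_Rk k φ)] at h₀ h₁ h₂ h₃ h₄
  simp only [frameComb_conj_Rk, E0_conj_Rk, E1_conj_Rk, E2_conj_Rk, E3m_conj_Rk, E4m_conj_Rk,
    zero_add] at h₀ h₁ h₂ h₃ h₄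
  exact ⟨h₀, h₁, h₂, h₃, h₄⟩

theorem coe_nnnorm_ofReal_mul_exp_mul_I {r : ℝ} (hr : 0 ≤ r) (φ : ℝ) :
    (‖(r : ℂ) * Complex.exp (φ * Complex.I)‖₊ : ℝ≥0∞) = ENNReal.ofReal r := by
  rw [← enorm_eq_nnnorm, ← ofReal_norm, norm_mul, Complex.norm_exp_ofReal_mul_I,
    Complex.norm_real, norm_of_nonneg hr, mul_one]

section Equivariance

variable {k : ℤ} {R : ℝ≥0∞} {Q : ℂ → M3}

theorem polar_eq_conj_of_equivariant (hk : Even k)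
    (hQ : ∀ ψ ∈ Set.Ico (0 : ℝ) (2 * π), ∀ x : ℂ, x ≠ 0 → (‖x‖₊ : ℝ≥0∞) < R →
      Q x = (Rk k ψ)ᵀ * Q (P2 ((Rk 2 ψ).mulVec (toR3 x))) * Rk k ψ)
    {r : ℝ} (hr : 0 < r) (hrR : ENNReal.ofReal r < R) (φ : ℝ) :
    Q (r * Complex.exp (φ * Complex.I)) = Rk k φ * Q r * (Rk k φ)ᵀ := by
  -- rotating by `ψ ≡ -φ` brings `r e^{iφ}` back to the positive real axis
  set ψ := toIcoMod two_pi_pos 0 (-φ)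
  have hψ : ψ ∈ Set.Ico 0 (2 * π) := by simpa using toIcoMod_mem_Ico two_pi_pos 0 (-φ)
  have hx : (r : ℂ) * Complex.exp (φ * Complex.I) ≠ 0 := by
    simp [hr.ne']
  have hrot : P2 (Rk 2 ψ *ᵥ toR3 (r * Complex.exp (φ * Complex.I))) = r := by
    rw [P2_Rk_two_mulVec_toR3, exp_mul_I_periodic.apply_toIcoMod, mul_left_comm,
      ← Complex.exp_add]
    simp
  rw [hQ ψ hψ _ hx (coe_nnnorm_ofReal_mul_exp_mul_I hr.le φ ▸ hrR), hrot,
    (Rk_periodic hk).apply_toIcoMod, transpose_Rk, transpose_Rk, neg_neg]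

theorem equivariant_of_polar_eq_frameComb (hk : Even k) {w₀ w₁ w₂ w₃ w₄ : ℝ → ℝ}
    (hw : ∀ r φ : ℝ, 0 < r → ENNReal.ofReal r < R → φ ∈ Set.Ico (0 : ℝ) (2 * π) →
      Q (r * Complex.exp (φ * Complex.I)) = frameComb k φ (w₀ r) (w₁ r) (w₂ r) (w₃ r) (w₄ r))
    (ψ : ℝ) {x : ℂ} (hx : x ≠ 0) (hxR : (‖x‖₊ : ℝ≥0∞) < R) :
    Q x = (Rk k ψ)ᵀ * Q (P2 ((Rk 2 ψ).mulVec (toR3 x))) * Rk k ψ := by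
  have hQ (φ : ℝ) : Q (‖x‖ * Complex.exp (φ * Complex.I)) =
      frameComb k φ (w₀ ‖x‖) (w₁ ‖x‖) (w₂ ‖x‖) (w₃ ‖x‖) (w₄ ‖x‖) := by
    rw [← exp_mul_I_periodic.apply_toIcoMod two_pi_pos 0 φ,
      ← (frameComb_periodic hk _ _ _ _ _).apply_toIcoMod two_pi_pos 0 φ]
    refine hw _ _ (norm_pos_iff.2 hx) (by rwa [ofReal_norm, enorm_eq_nnnorm]) ?_
    simpa using toIcoMod_mem_Ico two_pi_pos 0 φ
  have hpolar : x = ‖x‖ * Complex.exp (x.arg * Complex.I) :=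
    (Complex.norm_mul_exp_arg_mul_I x).symm
  have hrot : P2 (Rk 2 ψ *ᵥ toR3 x) = ‖x‖ * Complex.exp ((x.arg + ψ : ℝ) * Complex.I) := by
    rw [P2_Rk_two_mulVec_toR3]
    conv_lhs => rw [hpolar]
    push_cast
    rw [add_mul, Complex.exp_add]
    ring
  rw [hrot, hQ, ← frameComb_conj_Rk, ← hQ, ← hpolar, Matrix.mul_assoc, Matrix.mul_assoc,
    transpose_mul_Rk, Matrix.mul_one, ← Matrix.mul_assoc, transpose_mul_Rk, Matrix.one_mul]

end Equivariance

theorem stmt_0_general (k : ℤ) (hke : Even k) (R : ℝ≥0∞)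
    (Q : ℂ → M3)
    (hsymm : ∀ x : ℂ, x ≠ 0 → (‖x‖₊ : ℝ≥0∞) < R → (Q x)ᵀ = Q x)
    (htr : ∀ x : ℂ, x ≠ 0 → (‖x‖₊ : ℝ≥0∞) < R → (Q x).trace = 0) :
    (∀ ψ ∈ Set.Ico (0 : ℝ) (2 * Real.pi), ∀ x : ℂ, x ≠ 0 → (‖x‖₊ : ℝ≥0∞) < R →
        Q x = (Rk k ψ)ᵀ * Q (P2 ((Rk 2 ψ).mulVec (toR3 x))) * Rk k ψ)
      ↔ ∃ w₀ w₁ w₂ w₃ w₄ : ℝ → ℝ,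
          ∀ r φ : ℝ, 0 < r → ENNReal.ofReal r < R → φ ∈ Set.Ico (0 : ℝ) (2 * Real.pi) →
            Q ((r : ℂ) * Complex.exp ((φ : ℂ) * Complex.I)) =
                w₀ r • E0 + w₁ r • E1 k φ + w₂ r • E2 k φ + w₃ r • E3m k φ + w₄ r • E4m k φ
              ∧ w₀ r = (Q ((r : ℂ) * Complex.exp ((φ : ℂ) * Complex.I)) * E0).trace
              ∧ w₁ r = (Q ((r : ℂ) * Complex.exp ((φ : ℂ) * Complex.I)) * E1 k φ).trace
              ∧ w₂ r = (Q ((r : ℂ) * Complex.exp ((φ : ℂ) * Complex.I)) * E2 k φ).trace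
              ∧ w₃ r = (Q ((r : ℂ) * Complex.exp ((φ : ℂ) * Complex.I)) * E3m k φ).trace
              ∧ w₄ r = (Q ((r : ℂ) * Complex.exp ((φ : ℂ) * Complex.I)) * E4m k φ).trace := by
  constructor
  · intro hQ
    refine ⟨fun r => (Q r * E0).trace, fun r => (Q r * E1 k 0).trace,
      fun r => (Q r * E2 k 0).trace, fun r => (Q r * E3m k 0).trace,
      fun r => (Q r * E4m k 0).trace, fun r φ hr hrR _ => ?_⟩
    have hr₀ : (r : ℂ) ≠ 0 := by exact_mod_cast hr.ne'
    have hrR' : (‖(r : ℂ)‖₊ : ℝ≥0∞) < R := by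
      rwa [← enorm_eq_nnnorm, ← ofReal_norm, Complex.norm_real, norm_of_nonneg hr.le]
    have hQr := eq_frameComb_zero_of_traceless_symm k (hsymm r hr₀ hrR') (htr r hr₀ hrR')
    have hQx : Q (r * Complex.exp (φ * Complex.I)) =
        frameComb k φ (Q r * E0).trace (Q r * E1 k 0).trace (Q r * E2 k 0).trace
          (Q r * E3m k 0).trace (Q r * E4m k 0).trace := by
      rw [polar_eq_conj_of_equivariant hke hQ hr hrR, frameComb_eq_conj_zero k φ, ← hQr]
    obtain ⟨h₀, h₁, h₂, h₃, h₄⟩ := trace_frameComb_mul k φ (Q r * E0).trace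
      (Q r * E1 k 0).trace (Q r * E2 k 0).trace (Q r * E3m k 0).trace (Q r * E4m k 0).trace
    rw [hQx]
    exact ⟨rfl, h₀.symm, h₁.symm, h₂.symm, h₃.symm, h₄.symm⟩
  · rintro ⟨w₀, w₁, w₂, w₃, w₄, hw⟩ ψ - x hx hxR
    exact equivariant_of_polar_eq_frameComb hke (fun r φ hr hrR hφ => (hw r φ hr hrR hφ).1) ψ hx
      hxR

/-- A map `Q : B_R \ {0} → S₀` (with `k` even and nonzero, `R ∈ (0,∞]`) is
`k`-fold `SO(2)`-equivariant iff it has the form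
`Q = w₀(r)E₀ + w₁(r)E₁ + w₂(r)E₂ + w₃(r)E₃ + w₄(r)E₄`, in which case `wᵢ(|x|) = Q(x)·Eᵢ(x)`. -/
theorem stmt_0 (k : ℤ) (hk : k ≠ 0) (hke : Even k) (R : ℝ≥0∞) (hR : 0 < R)
    (Q : ℂ → M3)
    (hsymm : ∀ x : ℂ, x ≠ 0 → (‖x‖₊ : ℝ≥0∞) < R → (Q x)ᵀ = Q x)
    (htr : ∀ x : ℂ, x ≠ 0 → (‖x‖₊ : ℝ≥0∞) < R → (Q x).trace = 0) :
    (∀ ψ ∈ Set.Ico (0 : ℝ) (2 * Real.pi), ∀ x : ℂ, x ≠ 0 → (‖x‖₊ : ℝ≥0∞) < R →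
        Q x = (Rk k ψ)ᵀ * Q (P2 ((Rk 2 ψ).mulVec (toR3 x))) * Rk k ψ)
      ↔ ∃ w₀ w₁ w₂ w₃ w₄ : ℝ → ℝ,
          ∀ r φ : ℝ, 0 < r → ENNReal.ofReal r < R → φ ∈ Set.Ico (0 : ℝ) (2 * Real.pi) →
            Q ((r : ℂ) * Complex.exp ((φ : ℂ) * Complex.I)) =
                w₀ r • E0 + w₁ r • E1 k φ + w₂ r • E2 k φ + w₃ r • E3m k φ + w₄ r • E4m k φ
              ∧ w₀ r = (Q ((r : ℂ) * Complex.exp ((φ : ℂ) * Complex.I)) * E0).trace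
              ∧ w₁ r = (Q ((r : ℂ) * Complex.exp ((φ : ℂ) * Complex.I)) * E1 k φ).trace
              ∧ w₂ r = (Q ((r : ℂ) * Complex.exp ((φ : ℂ) * Complex.I)) * E2 k φ).trace
              ∧ w₃ r = (Q ((r : ℂ) * Complex.exp ((φ : ℂ) * Complex.I)) * E3m k φ).trace
              ∧ w₄ r = (Q ((r : ℂ) * Complex.exp ((φ : ℂ) * Complex.I)) * E4m k φ).trace :=
  stmt_0_general k hke R Q hsymm htr

end LdGStmt0
end
end

section
/- Let a² ≥ 0, b² > 0, c² > 0 and s₊ = (b² + √(b⁴ + 24a²c²))/(4c²). Let n be a unit vector in ℝ³, Q_* = s₊(n⊗n − I₃/3), and let P be a symmetric traceless 3×3 real matrix having n as an eigenvector. Then b² s₊ |P|² + 2 s₊ (c² s₊ − b²) (Pn·n)² ≥ min(2a² + (b²/3)s₊, b² s₊) |P|², where |P|² = tr(P²) is the squared Frobenius norm. In particular, the linear map P ↦ b² s₊ P + 2(c² s₊ − b²)(Pn·n) Q_* is a monotone (coercive) operator on the space of symmetric traceless matrices commuting with Q_*. -/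
/-!
Write `μ` for the eigenvalue of `P` at `n`, so `Pn·n = μ`. The matrix `Q = P - μ n⊗n` kills `n`,
hence `Q = Q (I - n⊗n)`, and Cauchy–Schwarz for the Frobenius product gives
`μ² = (tr Q)² ≤ |Q|² |I - n⊗n|² = (|P|² - μ²)(d - 1)`, i.e. `3μ² ≤ 2|P|²` in dimension 3.
If `c²s₊ ≥ b²` the `μ²` term is nonnegative and the bound `b²s₊|P|²` is immediate. Otherwise the
relation `2c²s₊² - b²s₊ - 3a² = 0` turns the difference with `(2a² + (b²/3)s₊)|P|²` into
`(2/3) s₊ (b² - c²s₊)(2|P|² - 3μ²) ≥ 0`.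
-/

noncomputable section

open Matrix

namespace LdGStmt6

section

variable {ι : Type*} [Fintype ι]

theorem trace_mul_eq_sum_mul_of_symm (A : Matrix ι ι ℝ) {B : Matrix ι ι ℝ} (hB : Bᵀ = B) :
    (A * B).trace = ∑ p : ι × ι, A p.1 p.2 * B p.1 p.2 := by
  simp only [trace, diag, mul_apply, Fintype.sum_prod_type]
  refine Finset.sum_congr rfl fun i _ => Finset.sum_congr rfl fun j _ => ?_
  rw [← hB, transpose_apply, hB]

theorem trace_mul_sq_le_of_symm {A B : Matrix ι ι ℝ} (hA : Aᵀ = A) (hB : Bᵀ = B) :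
    (A * B).trace ^ 2 ≤ (A * A).trace * (B * B).trace := by
  simpa only [trace_mul_eq_sum_mul_of_symm _ hA, trace_mul_eq_sum_mul_of_symm _ hB, ← sq]
    using Finset.sum_mul_sq_le_sq_mul_sq Finset.univ (fun p : ι × ι => A p.1 p.2)
      (fun p => B p.1 p.2)

theorem card_mul_sq_le_of_mulVec_eq_smul [DecidableEq ι] {P : Matrix ι ι ℝ} (hP : Pᵀ = P)
    (htr : P.trace = 0) {n : ι → ℝ} (hn : n ⬝ᵥ n = 1) {μ : ℝ} (hμ : P *ᵥ n = μ • n) :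
    Fintype.card ι * μ ^ 2 ≤ (Fintype.card ι - 1) * (P * P).trace := by
  set N := vecMulVec n n
  have hN : Nᵀ = N := transpose_vecMulVec n n
  have hNn : N *ᵥ n = n := by simp [N, vecMulVec_mulVec, hn]
  have hNN : N * N = N := by rw [vecMulVec_mul_vecMulVec, hn, one_smul]
  have hNP : (N * P).trace = μ := by
    rw [trace_mul_comm, mul_vecMulVec, hμ, trace_vecMulVec, smul_dotProduct, hn, smul_eq_mul,
      mul_one]
  set Q := P - μ • N
  set R := 1 - N
  have hQN : Q * N = 0 := by
    rw [mul_vecMulVec, sub_mulVec, smul_mulVec, hNn, hμ, sub_self, zero_vecMulVec]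
  have hQR : Q * R = Q := by rw [mul_sub, mul_one, hQN, sub_zero]
  have htrQ : Q.trace = -μ := by
    simp [Q, N, trace_sub, trace_smul, htr, hn]
  have htrQQ : (Q * Q).trace = (P * P).trace - μ ^ 2 := by
    have hQQ : Q * Q = P * P - μ • (N * P) := by
      calc Q * Q = Q * P - μ • (Q * N) := by rw [mul_sub, mul_smul_comm]
        _ = P * P - μ • (N * P) := by rw [hQN, smul_zero, sub_zero, sub_mul, smul_mul_assoc]
    rw [hQQ, trace_sub, trace_smul, hNP, smul_eq_mul, sq]
  have htrRR : (R * R).trace = Fintype.card ι - 1 := by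
    have hRR : R * R = R := by rw [sub_mul, one_mul, mul_sub, mul_one, hNN, sub_self, sub_zero]
    simp [hRR, R, N, trace_sub, hn]
  have hCS := trace_mul_sq_le_of_symm (A := Q) (B := R) (by simp [Q, hP, hN]) (by simp [R, hN])
  rw [hQR, htrQ, htrQQ, htrRR] at hCS
  linear_combination hCS

end

theorem quadratic_root_eq_zero {a b c s : ℝ} (ha : 0 ≤ a) (hc : 0 < c)
    (hs : s = (b + Real.sqrt (b ^ 2 + 24 * a * c)) / (4 * c)) :
    2 * c * s ^ 2 - b * s - 3 * a = 0 := by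
  subst hs
  field_simp
  linear_combination 2 * Real.sq_sqrt (show 0 ≤ b ^ 2 + c * 24 * a by positivity)

theorem min_mul_le_of_quadratic_root_eq_zero {a b c s μ T : ℝ} (hs : 0 ≤ s)
    (hroot : 2 * c * s ^ 2 - b * s - 3 * a = 0) (hμ : 3 * μ ^ 2 ≤ 2 * T) :
    min (2 * a + b / 3 * s) (b * s) * T ≤ b * s * T + 2 * s * (c * s - b) * μ ^ 2 := by
  have hT : 0 ≤ T := by nlinarith [sq_nonneg μ]
  rcases le_or_gt b (c * s) with hbc | hbc
  · calc min (2 * a + b / 3 * s) (b * s) * T ≤ b * s * T :=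
          mul_le_mul_of_nonneg_right (min_le_right _ _) hT
      _ ≤ b * s * T + 2 * s * (c * s - b) * μ ^ 2 :=
          le_add_of_nonneg_right <| mul_nonneg (mul_nonneg (by positivity) (sub_nonneg.2 hbc))
            (sq_nonneg μ)
  · calc min (2 * a + b / 3 * s) (b * s) * T ≤ (2 * a + b / 3 * s) * T :=
          mul_le_mul_of_nonneg_right (min_le_left _ _) hT
      _ = b * s * T + 2 * s * (c * s - b) * μ ^ 2
            - 2 / 3 * s * (b - c * s) * (2 * T - 3 * μ ^ 2) := by
          linear_combination (-2 / 3 * T) * hroot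
      _ ≤ b * s * T + 2 * s * (c * s - b) * μ ^ 2 :=
          sub_le_self _ <| mul_nonneg (mul_nonneg (by positivity) (sub_nonneg.2 hbc.le))
            (sub_nonneg.2 hμ)

/-- Coercivity of the transversal linearized operator: with
`s₊ = (b² + √(b⁴ + 24a²c²))/(4c²)`, for any unit vector `n` and any symmetric traceless
`3×3` matrix `P` having `n` as an eigenvector,
`b² s₊ |P|² + 2 s₊ (c² s₊ − b²)(Pn·n)² ≥ min(2a² + (b²/3)s₊, b² s₊) |P|²`. -/
theorem stmt_6 (a2 b2 c2 : ℝ) (ha : 0 ≤ a2) (hb : 0 < b2) (hc : 0 < c2)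
    (s : ℝ) (hs : s = (b2 + Real.sqrt (b2 ^ 2 + 24 * a2 * c2)) / (4 * c2))
    (n : Fin 3 → ℝ) (hn : n ⬝ᵥ n = 1)
    (P : Matrix (Fin 3) (Fin 3) ℝ) (hP : Pᵀ = P) (htr : P.trace = 0)
    (heig : ∃ μ : ℝ, P.mulVec n = μ • n) :
    b2 * s * (P * P).trace + 2 * s * (c2 * s - b2) * (P.mulVec n ⬝ᵥ n) ^ 2
      ≥ min (2 * a2 + (b2 / 3) * s) (b2 * s) * (P * P).trace := by
  obtain ⟨μ, hμ⟩ := heig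
  have hPnn : P *ᵥ n ⬝ᵥ n = μ := by rw [hμ, smul_dotProduct, hn, smul_eq_mul, mul_one]
  have hs0 : 0 ≤ s := by rw [hs]; positivity
  have hμT : 3 * μ ^ 2 ≤ 2 * (P * P).trace := by
    convert card_mul_sq_le_of_mulVec_eq_smul hP htr hn hμ using 2 <;> norm_num
  rw [hPnn]
  exact min_mul_le_of_quadratic_root_eq_zero hs0 (quadratic_root_eq_zero ha hc hs) hμT

end LdGStmt6
end
end

section
/- Let k ≥ 2 be an even integer and let D be the open unit disk in ℝ². For every smooth function ζ : ℝ² → ℝ with compact support contained in D, one has ∫_D |∇ζ(x)|² dx ≥ ∫_D (2k² |x|^{k−2}/(1 + |x|^k)²) ζ(x)² dx. -/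
/-!
The third component `φ = (1 - |x|^k) / (1 + |x|^k)` of `n_*^+` is positive on the unit disk and
solves `-Δφ = W φ` for the weight `W = 2k²|x|^{k-2} / (1 + |x|^k)²`. Testing this equation against
`ζ² / φ` and integrating by parts gives `∫ W ζ² = ∫ ∇φ · ∇(ζ² / φ)`, and pointwise
`|∇ζ|² - ∇φ · ∇(ζ² / φ) = |∇ζ - ζ ∇φ / φ|² ≥ 0` (Picone's identity).
-/

noncomputable section

open MeasureTheory InnerProductSpace Laplacian

namespace LdGStmt11

theorem mul_two_mul_div_sub_le_sq {w : ℝ} (hw : w ≠ 0) (a b z : ℝ) :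
    a * (2 * z * b / w - z ^ 2 * a / w ^ 2) ≤ b ^ 2 := by
  have key : b ^ 2 - a * (2 * z * b / w - z ^ 2 * a / w ^ 2) = (b - z * a / w) ^ 2 := by
    field_simp
    ring
  rw [← sub_nonneg, key]
  positivity

section NormedSpace

variable {E : Type*} [NormedAddCommGroup E] [NormedSpace ℝ E]

theorem fderiv_mul_fderiv_sq_div_le {φ ζ : E → ℝ} {x : E} (hφ : DifferentiableAt ℝ φ x)
    (hζ : DifferentiableAt ℝ ζ x) (hx : φ x ≠ 0) (v : E) :
    fderiv ℝ φ x v * fderiv ℝ (fun y => ζ y ^ 2 / φ y) x v ≤ fderiv ℝ ζ x v ^ 2 := by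
  have hu : HasFDerivAt (fun y => ζ y ^ 2 * (φ y)⁻¹)
      (ζ x ^ 2 • -(φ x ^ 2)⁻¹ • fderiv ℝ φ x + (φ x)⁻¹ • (2 • ζ x ^ (2 - 1)) • fderiv ℝ ζ x) x :=
    (hζ.hasFDerivAt.pow 2).fun_mul ((hasDerivAt_inv hx).comp_hasFDerivAt x hφ.hasFDerivAt)
  simp only [div_eq_mul_inv, hu.fderiv]
  calc _ = fderiv ℝ φ x v *
        (2 * ζ x * fderiv ℝ ζ x v / φ x - ζ x ^ 2 * fderiv ℝ φ x v / φ x ^ 2) := by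
        simp only [add_apply, smul_apply, smul_eq_mul, nsmul_eq_mul]
        ring
    _ ≤ _ := mul_two_mul_div_sub_le_sq hx _ _ _

theorem contDiff_div_of_ne_zero_on_tsupport {n : WithTop ℕ∞} {f g : E → ℝ} (hf : ContDiff ℝ n f)
    (hg : ContDiff ℝ n g) (hne : ∀ x ∈ tsupport f, g x ≠ 0) :
    ContDiff ℝ n fun x => f x / g x := by
  rw [contDiff_iff_contDiffAt]
  intro x
  by_cases hx : x ∈ tsupport f
  · exact hf.contDiffAt.div hg.contDiffAt (hne x hx)
  · refine contDiffAt_const (c := 0).congr_of_eventuallyEq ?_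
    filter_upwards [notMem_tsupport_iff_eventuallyEq.mp hx] with y hy
    simp [hy]

end NormedSpace

theorem hasFDerivAt_comp_norm_sq {E : Type*} [NormedAddCommGroup E] [InnerProductSpace ℝ E]
    {g g' : ℝ → ℝ} (hg : ∀ t, 0 ≤ t → HasDerivAt g (g' t) t) (x : E) :
    HasFDerivAt (fun y => g (‖y‖ ^ 2)) ((2 * g' (‖x‖ ^ 2)) • innerSL ℝ x) x := by
  refine ((hg _ (sq_nonneg ‖x‖)).comp_hasFDerivAt x (hasFDerivAt_id x).norm_sq).congr_fderiv ?_
  ext v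
  simp only [id_eq, ContinuousLinearMap.comp_id, smul_apply, coe_innerSL_apply, nsmul_eq_mul,
    smul_eq_mul]
  ring

section EuclideanSpace

variable {ι : Type*} [Fintype ι] [DecidableEq ι]

theorem laplacian_eq_sum_fderiv_fderiv {f : EuclideanSpace ℝ ι → ℝ} {x : EuclideanSpace ℝ ι}
    (hf : ContDiffAt ℝ 2 f x) :
    Δ f x = ∑ i, fderiv ℝ (fun y => fderiv ℝ f y (EuclideanSpace.single i 1)) x
      (EuclideanSpace.single i 1) := by
  have hdf : DifferentiableAt ℝ (fderiv ℝ f) x :=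
    (hf.fderiv_right (m := 1) le_rfl).differentiableAt one_ne_zero
  rw [laplacian_eq_iteratedFDeriv_orthonormalBasis f (EuclideanSpace.basisFun ι ℝ)]
  refine Finset.sum_congr rfl fun i _ => ?_
  rw [iteratedFDeriv_two_apply, fderiv_clm_apply hdf (differentiableAt_const _)]
  simp

theorem integral_sum_fderiv_mul_fderiv_eq_neg_laplacian_mul {φ u : EuclideanSpace ℝ ι → ℝ}
    (hφ : ContDiff ℝ 2 φ) (hu : ContDiff ℝ 1 u) (hu_supp : HasCompactSupport u) :
    ∫ x, ∑ i, fderiv ℝ φ x (EuclideanSpace.single i 1) * fderiv ℝ u x (EuclideanSpace.single i 1)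
      = -∫ x, Δ φ x * u x := by
  have hdφ (i : ι) : ContDiff ℝ 1 fun y => fderiv ℝ φ y (EuclideanSpace.single i 1) :=
    (hφ.fderiv_right (m := 1) le_rfl).clm_apply contDiff_const
  have hdu (i : ι) : Continuous fun x => fderiv ℝ u x (EuclideanSpace.single i 1) :=
    (hu.continuous_fderiv one_ne_zero).clm_apply continuous_const
  have hint₁ (i : ι) : Integrable fun x => fderiv ℝ (fun y => fderiv ℝ φ y
      (EuclideanSpace.single i 1)) x (EuclideanSpace.single i 1) * u x :=
    (((hdφ i).continuous_fderiv one_ne_zero).clm_apply continuous_const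
      |>.mul hu.continuous).integrable_of_hasCompactSupport hu_supp.mul_left
  have hint₂ (i : ι) : Integrable fun x =>
      fderiv ℝ φ x (EuclideanSpace.single i 1) * fderiv ℝ u x (EuclideanSpace.single i 1) :=
    ((hdφ i).continuous.mul (hdu i)).integrable_of_hasCompactSupport
      (hu_supp.fderiv_apply ℝ (EuclideanSpace.single i (1 : ℝ))).mul_left
  have hparts (i : ι) := integral_mul_fderiv_eq_neg_fderiv_mul_of_integrable (hint₁ i) (hint₂ i)
    (((hdφ i).continuous.mul hu.continuous).integrable_of_hasCompactSupport hu_supp.mul_left)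
    (fun x _ => (hdφ i).differentiable one_ne_zero x) (fun x _ => hu.differentiable one_ne_zero x)
  have hΔ (x) : Δ φ x * u x = ∑ i, fderiv ℝ (fun y => fderiv ℝ φ y (EuclideanSpace.single i 1)) x
      (EuclideanSpace.single i 1) * u x := by
    rw [laplacian_eq_sum_fderiv_fderiv hφ.contDiffAt, Finset.sum_mul]
  simp only [hΔ]
  rw [integral_finsetSum _ fun i _ => hint₂ i, integral_finsetSum _ fun i _ => hint₁ i,
    ← Finset.sum_neg_distrib]
  exact Finset.sum_congr rfl fun i _ => hparts i

theorem integral_mul_sq_le_of_neg_laplacian_eq_mul {φ W ζ : EuclideanSpace ℝ ι → ℝ}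
    (hφ : ContDiff ℝ 2 φ) (hζ : ContDiff ℝ 1 ζ) (hζ_supp : HasCompactSupport ζ)
    (hφ_ne : ∀ x ∈ tsupport ζ, φ x ≠ 0) (hΔ : ∀ x ∈ tsupport ζ, -Δ φ x = W x * φ x) :
    ∫ x, W x * ζ x ^ 2 ≤ ∫ x, ∑ i, fderiv ℝ ζ x (EuclideanSpace.single i 1) ^ 2 := by
  set u := fun x => ζ x ^ 2 / φ x with hu_def
  have hu_supp_sub : tsupport u ⊆ tsupport ζ := closure_mono fun x hx => by simp_all [u]
  have hu : ContDiff ℝ 1 u := contDiff_div_of_ne_zero_on_tsupport (hζ.pow 2)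
    (hφ.of_le one_le_two) fun x hx => hφ_ne x (closure_mono (fun y hy => by simp_all) hx)
  have hu_supp : HasCompactSupport u := hζ_supp.mono' (subset_closure.trans hu_supp_sub)
  have hweight (x) : W x * ζ x ^ 2 = -Δ φ x * u x := by
    by_cases hx : x ∈ tsupport ζ
    · rw [hΔ x hx, hu_def]
      field_simp [hφ_ne x hx]
    · simp [image_eq_zero_of_notMem_tsupport hx, u]
  have hpicone (x) : ∑ i, fderiv ℝ φ x (EuclideanSpace.single i 1) *
      fderiv ℝ u x (EuclideanSpace.single i 1)
        ≤ ∑ i, fderiv ℝ ζ x (EuclideanSpace.single i 1) ^ 2 := by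
    by_cases hx : x ∈ tsupport ζ
    · exact Finset.sum_le_sum fun i _ => fderiv_mul_fderiv_sq_div_le
        (hφ.differentiable two_ne_zero x) (hζ.differentiable one_ne_zero x) (hφ_ne x hx) _
    · simp only [fderiv_of_notMem_tsupport ℝ (fun h => hx (hu_supp_sub h)),
        zero_apply, mul_zero, Finset.sum_const_zero]
      positivity
  have hpartial_cont {f : EuclideanSpace ℝ ι → ℝ} (hf : ContDiff ℝ 1 f) (i : ι) :
      Continuous fun x => fderiv ℝ f x (EuclideanSpace.single i 1) :=
    (hf.continuous_fderiv one_ne_zero).clm_apply continuous_const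
  have hint_lhs : Integrable fun x => ∑ i, fderiv ℝ φ x (EuclideanSpace.single i 1) *
      fderiv ℝ u x (EuclideanSpace.single i 1) :=
    integrable_finsetSum _ fun i _ => ((hpartial_cont (hφ.of_le one_le_two) i).mul
      (hpartial_cont hu i)).integrable_of_hasCompactSupport
        (hu_supp.fderiv_apply ℝ (EuclideanSpace.single i 1)).mul_left
  have hint_rhs : Integrable fun x => ∑ i, fderiv ℝ ζ x (EuclideanSpace.single i 1) ^ 2 :=
    integrable_finsetSum _ fun i _ => ((hpartial_cont hζ i).pow 2).integrable_of_hasCompactSupport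
        ((hζ_supp.fderiv_apply ℝ (EuclideanSpace.single i 1)).comp_left
          (g := fun t : ℝ => t ^ 2) (zero_pow two_ne_zero) :)
  calc ∫ x, W x * ζ x ^ 2 = ∫ x, -Δ φ x * u x := by simp only [hweight]
    _ = ∫ x, ∑ i, fderiv ℝ φ x (EuclideanSpace.single i 1) *
        fderiv ℝ u x (EuclideanSpace.single i 1) := by
      rw [integral_sum_fderiv_mul_fderiv_eq_neg_laplacian_mul hφ hu hu_supp, ← integral_neg]
      simp only [neg_mul]
    _ ≤ _ := integral_mono hint_lhs hint_rhs hpicone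

variable {g g' g'' : ℝ → ℝ}

theorem fderiv_comp_norm_sq_apply_single (hg : ∀ t, 0 ≤ t → HasDerivAt g (g' t) t)
    (x : EuclideanSpace ℝ ι) (i : ι) :
    fderiv ℝ (fun y => g (‖y‖ ^ 2)) x (EuclideanSpace.single i 1) = 2 * g' (‖x‖ ^ 2) * x i := by
  rw [(hasFDerivAt_comp_norm_sq hg x).fderiv]
  simp [EuclideanSpace.inner_single_right]

theorem laplacian_comp_norm_sq (hg : ∀ t, 0 ≤ t → HasDerivAt g (g' t) t)
    (hg' : ∀ t, 0 ≤ t → HasDerivAt g' (g'' t) t) {x : EuclideanSpace ℝ ι}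
    (hφ : ContDiffAt ℝ 2 (fun y => g (‖y‖ ^ 2)) x) :
    Δ (fun y : EuclideanSpace ℝ ι => g (‖y‖ ^ 2)) x
      = 4 * ‖x‖ ^ 2 * g'' (‖x‖ ^ 2) + 2 * Fintype.card ι * g' (‖x‖ ^ 2) := by
  rw [laplacian_eq_sum_fderiv_fderiv hφ]
  simp_rw [fderiv_comp_norm_sq_apply_single hg]
  have h (i : ι) : HasFDerivAt (fun y : EuclideanSpace ℝ ι => 2 * g' (‖y‖ ^ 2) * y i)
      ((2 * g' (‖x‖ ^ 2)) • EuclideanSpace.proj i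
        + x i • (2 : ℝ) • (2 * g'' (‖x‖ ^ 2)) • innerSL ℝ x) x :=
    ((hasFDerivAt_comp_norm_sq hg' x).const_mul 2).fun_mul
      (EuclideanSpace.proj i : EuclideanSpace ℝ ι →L[ℝ] ℝ).hasFDerivAt
  have hsum : ∑ i, x i * (2 * (2 * g'' (‖x‖ ^ 2) * x i)) = 4 * ‖x‖ ^ 2 * g'' (‖x‖ ^ 2) := by
    rw [EuclideanSpace.real_norm_sq_eq x, Finset.mul_sum, Finset.sum_mul]
    exact Finset.sum_congr rfl fun i _ => by ring
  simp only [fun i => (h i).fderiv]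
  simp only [add_apply, smul_apply, PiLp.proj_apply, PiLp.single_eq_same, smul_eq_mul, mul_one,
    coe_innerSL_apply, EuclideanSpace.inner_single_right, Real.ringHom_apply, one_mul,
    Finset.sum_add_distrib, Finset.sum_const, Finset.card_univ, nsmul_eq_mul, hsum]
  ring

end EuclideanSpace

section HeightProfile

variable (p : ℕ)

/-- With `t = |x|²` and `k = 2p + 2`, `heightProfile p (|x|²)` is the third component of `n_*^+`. -/
def heightProfile (t : ℝ) : ℝ := (1 - t ^ (p + 1)) / (1 + t ^ (p + 1))

def heightProfileDeriv (t : ℝ) : ℝ := -(2 * (p + 1)) * t ^ p / (1 + t ^ (p + 1)) ^ 2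

/-- The truncated `p - 1` is harmless at `p = 0`, where its term carries the factor `p`. -/
def heightProfileDeriv2 (t : ℝ) : ℝ :=
  -(2 * (p + 1)) * (p * t ^ (p - 1) * (1 + t ^ (p + 1)) - 2 * (p + 1) * t ^ (2 * p))
    / (1 + t ^ (p + 1)) ^ 3

variable {p}

theorem hasDerivAt_heightProfile {t : ℝ} (ht : 0 ≤ t) :
    HasDerivAt (heightProfile p) (heightProfileDeriv p t) t := by
  have hpos : 0 < 1 + t ^ (p + 1) := by positivity
  have hpow : HasDerivAt (· ^ (p + 1)) ((p + 1) * t ^ p) t := by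
    simpa using hasDerivAt_pow (p + 1) t
  refine (((hasDerivAt_const t 1).fun_sub hpow).fun_div ((hasDerivAt_const t 1).fun_add hpow)
    hpos.ne').congr_deriv ?_
  unfold heightProfileDeriv
  field_simp
  ring

theorem hasDerivAt_heightProfileDeriv {t : ℝ} (ht : 0 ≤ t) :
    HasDerivAt (heightProfileDeriv p) (heightProfileDeriv2 p t) t := by
  have hpow : HasDerivAt (· ^ (p + 1)) ((p + 1) * t ^ p) t := by
    simpa using hasDerivAt_pow (p + 1) t
  refine (((hasDerivAt_pow p t).const_mul (-(2 * (p + 1) : ℝ))).fun_div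
    (((hasDerivAt_const t 1).fun_add hpow).fun_pow 2) (by positivity)).congr_deriv ?_
  unfold heightProfileDeriv2
  field_simp
  ring

theorem heightProfile_ode (t : ℝ) :
    4 * t * heightProfileDeriv2 p t + 4 * heightProfileDeriv p t
      = -(8 * (p + 1) ^ 2 * t ^ p / (1 + t ^ (p + 1)) ^ 2) * heightProfile p t := by
  have hpred : (p : ℝ) * t ^ (p - 1) * t = p * t ^ p := by
    rcases p with _ | p
    · simp
    · simp [pow_succ, mul_assoc]
  have ht_mul : t * heightProfileDeriv2 p t = -(2 * (p + 1)) *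
      (p * t ^ p * (1 + t ^ (p + 1)) - 2 * (p + 1) * t ^ (2 * p + 1)) / (1 + t ^ (p + 1)) ^ 3 := by
    unfold heightProfileDeriv2
    rw [← hpred]
    ring
  rw [mul_assoc 4 t, ht_mul]
  unfold heightProfileDeriv heightProfile
  field_simp
  ring

theorem heightProfile_pos {t : ℝ} (ht₀ : 0 ≤ t) (ht₁ : t < 1) : 0 < heightProfile p t := by
  have : t ^ (p + 1) < 1 := pow_lt_one₀ ht₀ ht₁ p.succ_ne_zero
  unfold heightProfile
  exact div_pos (by linarith) (by positivity)

theorem contDiff_heightProfile_norm_sq {E : Type*} [NormedAddCommGroup E] [InnerProductSpace ℝ E]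
    {n : WithTop ℕ∞} : ContDiff ℝ n fun y : E => heightProfile p (‖y‖ ^ 2) :=
  ((contDiff_const.sub ((contDiff_norm_sq ℝ).pow _)).div
    (contDiff_const.add ((contDiff_norm_sq ℝ).pow _))) fun y => by positivity

theorem neg_laplacian_heightProfile_norm_sq (x : EuclideanSpace ℝ (Fin 2)) :
    -Δ (fun y : EuclideanSpace ℝ (Fin 2) => heightProfile p (‖y‖ ^ 2)) x
      = 8 * (p + 1) ^ 2 * (‖x‖ ^ 2) ^ p / (1 + (‖x‖ ^ 2) ^ (p + 1)) ^ 2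
        * heightProfile p (‖x‖ ^ 2) := by
  rw [laplacian_comp_norm_sq (fun _ => hasDerivAt_heightProfile)
    (fun _ => hasDerivAt_heightProfileDeriv) contDiff_heightProfile_norm_sq.contDiffAt,
    Fintype.card_fin]
  linear_combination -heightProfile_ode (p := p) (‖x‖ ^ 2)

end HeightProfile

/-- Stability inequality for the minimizing harmonic map `n_*^+`: for even
`k ≥ 2` and every smooth `ζ : ℝ² → ℝ` with compact support in the unit disk `D`,
`∫_D |∇ζ|² dx ≥ ∫_D (2k²|x|^{k−2}/(1+|x|^k)²) ζ² dx`. -/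
theorem stmt_11 (k : ℕ) (hk : 2 ≤ k) (hke : Even k)
    (ζ : EuclideanSpace ℝ (Fin 2) → ℝ) (hζ : ContDiff ℝ (⊤ : ℕ∞) ζ)
    (hsupp : tsupport ζ ⊆ Metric.ball 0 1) :
    ∫ x in Metric.ball (0 : EuclideanSpace ℝ (Fin 2)) 1,
        ∑ i : Fin 2, (fderiv ℝ ζ x (EuclideanSpace.single i 1)) ^ 2
      ≥ ∫ x in Metric.ball (0 : EuclideanSpace ℝ (Fin 2)) 1,
          (2 * (k : ℝ) ^ 2 * ‖x‖ ^ (k - 2) / (1 + ‖x‖ ^ k) ^ 2) * (ζ x) ^ 2 := by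
  obtain ⟨p, rfl⟩ : ∃ p, k = 2 * p + 2 := ⟨k / 2 - 1, by obtain ⟨a, rfl⟩ := hke; omega⟩
  have hζ_supp : HasCompactSupport ζ :=
    (isCompact_closedBall 0 1).of_isClosed_subset (isClosed_tsupport ζ)
      (hsupp.trans Metric.ball_subset_closedBall)
  have hout {x} (hx : x ∉ Metric.ball (0 : EuclideanSpace ℝ (Fin 2)) 1) : x ∉ tsupport ζ :=
    fun h => hx (hsupp h)
  rw [setIntegral_eq_integral_of_forall_compl_eq_zero fun x hx => by
      simp [fderiv_of_notMem_tsupport ℝ (hout hx)],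
    setIntegral_eq_integral_of_forall_compl_eq_zero fun x hx => by
      simp [image_eq_zero_of_notMem_tsupport (hout hx)], ge_iff_le]
  refine integral_mul_sq_le_of_neg_laplacian_eq_mul (contDiff_heightProfile_norm_sq (p := p))
    (hζ.of_le (by norm_cast)) hζ_supp
    (fun x hx => (heightProfile_pos (sq_nonneg _) ?_).ne') fun x _ => ?_
  · exact pow_lt_one₀ (norm_nonneg x) (mem_ball_zero_iff.mp (hsupp hx)) two_ne_zero
  · rw [neg_laplacian_heightProfile_norm_sq, Nat.add_sub_cancel]
    push_cast
    ring

end LdGStmt11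
end
end

section
/- Define g(x,y,z) = 2x³ − 6xy² + 3xz² + 3√3·yz² for real x, y, z. Then −2(x² + y² + z²)^{3/2} ≤ g(x,y,z) ≤ 2(x² + y² + z²)^{3/2} for all x, y, z. Equality in the first inequality holds if and only if (x,y,z) = s(1/2, √3/2, 0) for some s ≥ 0 or x + √3 y = −√(x² + y² + z²); equality in the second inequality holds if and only if (x,y,z) = s(1/2, √3/2, 0) for some s ≤ 0 or x + √3 y = √(x² + y² + z²). -/
noncomputable section

namespace LdGStmt13

/-- Lemma D.1 of the paper. For `g(x,y,z) = 2x³ − 6xy² + 3xz² + 3√3·yz²`: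
`−2(x²+y²+z²)^{3/2} ≤ g(x,y,z) ≤ 2(x²+y²+z²)^{3/2}`, with the stated equality conditions
(`(x²+y²+z²)^{3/2}` is written as `√(x²+y²+z²)³`). -/
theorem stmt_13 (x y z : ℝ) :
    (-(2 * Real.sqrt (x ^ 2 + y ^ 2 + z ^ 2) ^ 3)
          ≤ 2 * x ^ 3 - 6 * x * y ^ 2 + 3 * x * z ^ 2 + 3 * Real.sqrt 3 * y * z ^ 2
      ∧ 2 * x ^ 3 - 6 * x * y ^ 2 + 3 * x * z ^ 2 + 3 * Real.sqrt 3 * y * z ^ 2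
          ≤ 2 * Real.sqrt (x ^ 2 + y ^ 2 + z ^ 2) ^ 3)
    ∧ (2 * x ^ 3 - 6 * x * y ^ 2 + 3 * x * z ^ 2 + 3 * Real.sqrt 3 * y * z ^ 2
          = -(2 * Real.sqrt (x ^ 2 + y ^ 2 + z ^ 2) ^ 3)
        ↔ ((∃ s : ℝ, 0 ≤ s ∧ x = s / 2 ∧ y = s * Real.sqrt 3 / 2 ∧ z = 0)
            ∨ x + Real.sqrt 3 * y = -Real.sqrt (x ^ 2 + y ^ 2 + z ^ 2)))
    ∧ (2 * x ^ 3 - 6 * x * y ^ 2 + 3 * x * z ^ 2 + 3 * Real.sqrt 3 * y * z ^ 2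
          = 2 * Real.sqrt (x ^ 2 + y ^ 2 + z ^ 2) ^ 3
        ↔ ((∃ s : ℝ, s ≤ 0 ∧ x = s / 2 ∧ y = s * Real.sqrt 3 / 2 ∧ z = 0)
            ∨ x + Real.sqrt 3 * y = Real.sqrt (x ^ 2 + y ^ 2 + z ^ 2))) := by
  set c := Real.sqrt 3 with hcdef
  set r := Real.sqrt (x ^ 2 + y ^ 2 + z ^ 2) with hrdef
  have hrnn : 0 ≤ r := Real.sqrt_nonneg _
  have hcnn : 0 ≤ c := Real.sqrt_nonneg _
  have hr2 : r ^ 2 = x ^ 2 + y ^ 2 + z ^ 2 := Real.sq_sqrt (by positivity)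
  have hc2 : c ^ 2 = 3 := Real.sq_sqrt (by norm_num)
  have hup : 2 * r ^ 3 - (2 * x ^ 3 - 6 * x * y ^ 2 + 3 * x * z ^ 2 + 3 * c * y * z ^ 2)
      = ((x + c * y) + 2 * r) * ((x + c * y) - r) ^ 2 := by
    linear_combination 3 * (x + c * y) * hr2 - (3 * x * y ^ 2 + c * y ^ 3) * hc2
  have hdn : 2 * r ^ 3 + (2 * x ^ 3 - 6 * x * y ^ 2 + 3 * x * z ^ 2 + 3 * c * y * z ^ 2)
      = (2 * r - (x + c * y)) * ((x + c * y) + r) ^ 2 := by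
    linear_combination (-3) * (x + c * y) * hr2 + (3 * x * y ^ 2 + c * y ^ 3) * hc2
  have hbound : (x + c * y) ^ 2 + ((c * x - y) ^ 2 + 4 * z ^ 2) = 4 * r ^ 2 := by
    linear_combination (-4) * hr2 + (x ^ 2 + y ^ 2) * hc2
  have hule : x + c * y ≤ 2 * r := by
    nlinarith [sq_nonneg (c * x - y), sq_nonneg z, sq_nonneg ((x + c * y) - 2 * r), hrnn]
  have huge : -(2 * r) ≤ x + c * y := by
    nlinarith [sq_nonneg (c * x - y), sq_nonneg z, sq_nonneg ((x + c * y) + 2 * r), hrnn]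
  refine ⟨⟨?_, ?_⟩, ?_, ?_⟩
  · have h0 : 0 ≤ (2 * r - (x + c * y)) * ((x + c * y) + r) ^ 2 :=
      mul_nonneg (by linarith) (sq_nonneg _)
    linarith
  · have h0 : 0 ≤ ((x + c * y) + 2 * r) * ((x + c * y) - r) ^ 2 :=
      mul_nonneg (by linarith) (sq_nonneg _)
    linarith
  · -- lower equality
    constructor
    · intro h
      have h0 : (2 * r - (x + c * y)) * ((x + c * y) + r) ^ 2 = 0 := by linarith
      rcases mul_eq_zero.1 h0 with h1 | h1
      · -- u = 2r, the s ≥ 0 ray case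
        have hu : x + c * y = 2 * r := by linarith
        have hsq : (c * x - y) ^ 2 + 4 * z ^ 2 = 0 := by
          linear_combination hbound - ((x + c * y) + 2 * r) * hu
        have hxy : c * x - y = 0 := by
          have e1 := sq_nonneg (c * x - y); have e2 := sq_nonneg z
          have : (c * x - y) ^ 2 = 0 := by linarith
          exact (pow_eq_zero_iff two_ne_zero).mp this
        have hz : z = 0 := by
          have e1 := sq_nonneg (c * x - y); have e2 := sq_nonneg z
          have : z ^ 2 = 0 := by linarith
          exact (pow_eq_zero_iff two_ne_zero).mp this
        have hu4 : x + c * y = 4 * x := by linear_combination (-c) * hxy + x * hc2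
        refine Or.inl ⟨2 * x, by linarith, by ring, by linear_combination -hxy, hz⟩
      · -- u = -r case
        have hu := (pow_eq_zero_iff two_ne_zero).mp h1
        exact Or.inr (by linarith)
    · rintro (⟨s, hs, hx, hy, hz⟩ | h)
      · subst hx hy hz
        have hrs : r = s := by
          rw [hrdef, show (s / 2) ^ 2 + (s * c / 2) ^ 2 + 0 ^ 2 = s ^ 2 by
            linear_combination (s ^ 2 / 4) * hc2]
          exact Real.sqrt_sq hs
        linear_combination 2 * (r ^ 2 + r * s + s ^ 2) * hrs - (3 / 4) * s ^ 3 * hc2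
      · linear_combination hdn + (2 * r - (x + c * y)) * ((x + c * y) + r) * h
  · -- upper equality
    constructor
    · intro h
      have h0 : ((x + c * y) + 2 * r) * ((x + c * y) - r) ^ 2 = 0 := by linarith
      rcases mul_eq_zero.1 h0 with h1 | h1
      · -- u = -2r, the s ≤ 0 ray case
        have hu : x + c * y = -(2 * r) := by linarith
        have hsq : (c * x - y) ^ 2 + 4 * z ^ 2 = 0 := by
          linear_combination hbound - ((x + c * y) - 2 * r) * hu
        have hxy : c * x - y = 0 := by
          have e1 := sq_nonneg (c * x - y); have e2 := sq_nonneg z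
          have : (c * x - y) ^ 2 = 0 := by linarith
          exact (pow_eq_zero_iff two_ne_zero).mp this
        have hz : z = 0 := by
          have e1 := sq_nonneg (c * x - y); have e2 := sq_nonneg z
          have : z ^ 2 = 0 := by linarith
          exact (pow_eq_zero_iff two_ne_zero).mp this
        have hu4 : x + c * y = 4 * x := by linear_combination (-c) * hxy + x * hc2
        refine Or.inl ⟨2 * x, by linarith, by ring, by linear_combination -hxy, hz⟩
      · -- u = r case
        have hu := (pow_eq_zero_iff two_ne_zero).mp h1
        exact Or.inr (by linarith)
    · rintro (⟨s, hs, hx, hy, hz⟩ | h)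
      · subst hx hy hz
        have hrs : r = -s := by
          rw [hrdef, show (s / 2) ^ 2 + (s * c / 2) ^ 2 + 0 ^ 2 = s ^ 2 by
            linear_combination (s ^ 2 / 4) * hc2]
          rw [Real.sqrt_sq_eq_abs, abs_of_nonpos hs]
        linear_combination (-2) * (r ^ 2 - r * s + s ^ 2) * hrs - (3 / 4) * s ^ 3 * hc2
      · linear_combination -hup - ((x + c * y) + 2 * r) * ((x + c * y) - r) * h

end LdGStmt13
end
end

section
/- Let a² ≥ 0, b² > 0, c² > 0, s₊ = (b² + √(b⁴ + 24a²c²))/(4c²), f_* = −(a²/3)s₊² − (2b²/27)s₊³ + (c²/9)s₊⁴, and h(x,y) = (−a²/2 + (c²/4)(x² + y²))(x² + y²) − (b²√6/18)·y·(y² − 3x²) − f_*. Then there exists a constant C > 0 such that h(x,y) ≥ (1/C)(x − s₊/√2)² for all (x,y) ∈ ℝ² satisfying x² + y² ≤ (2/3)s₊² and s₊/(3√2) ≤ x ≤ s₊/√2. -/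
noncomputable section

namespace LdGStmt16

private lemma key (s u v : ℝ) (hs : 0 < s) (h1 : 3*u^2+v^2 ≤ 4*s^2) (h2 : s ≤ 3*u) (h3 : u ≤ s) :
    108*s^2*(u-s)^2 ≤ 75*(3*u^2+v^2-4*s^2)^2 + 200*s*((v+s)*(3*u+2*s-v)*(3*u+v-2*s)) := by
  have he : (0:ℝ) ≤ s - u := by linarith
  have hg3 : (0:ℝ) ≤ 3*u - s := by linarith
  have hv2 : v ≤ 2*s := by nlinarith [sq_nonneg (v-2*s), sq_nonneg u]
  have hsg3 : (0:ℝ) ≤ s*(3*u-s) := mul_nonneg hs.le hg3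
  have hsv : (0:ℝ) ≤ s*(2*s-v) := mul_nonneg hs.le (by linarith)
  nlinarith [sq_nonneg ((s-4*u+v)*(v+s)), sq_nonneg ((v-2*u-s)*(v+s)),
    mul_nonneg hsg3 (sq_nonneg (2*s-u+v)),
    mul_nonneg hsv (sq_nonneg (u+v)),
    sq_nonneg ((s-4*u)*(v+s)),
    mul_nonneg (mul_nonneg he hg3) (sq_nonneg (u+v)),
    mul_nonneg hsg3 (sq_nonneg (s-u)),
    mul_nonneg hsg3 (sq_nonneg (u+v)),
    sq_nonneg ((5*s-4*u-2*v)*(v+s)),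
    sq_nonneg ((s-4*u-v)*(s-u)),
    sq_nonneg (4*s^2-3*u^2-v^2),
    mul_nonneg hsv (sq_nonneg (s-2*u-v))]

set_option maxHeartbeats 1000000 in
/-- Eq. (4.3) of the paper. With `s₊ = (b² + √(b⁴+24a²c²))/(4c²)`,
`f_* = −(a²/3)s₊² − (2b²/27)s₊³ + (c²/9)s₊⁴` and
`h(x,y) = (−a²/2 + (c²/4)(x²+y²))(x²+y²) − (b²√6/18)y(y²−3x²) − f_*`, there is `C > 0`
such that `h(x,y) ≥ (1/C)(x − s₊/√2)²` whenever `x² + y² ≤ (2/3)s₊²` and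
`s₊/(3√2) ≤ x ≤ s₊/√2`. -/
theorem stmt_16 (a2 b2 c2 : ℝ) (ha : 0 ≤ a2) (hb : 0 < b2) (hc : 0 < c2)
    (s : ℝ) (hs : s = (b2 + Real.sqrt (b2 ^ 2 + 24 * a2 * c2)) / (4 * c2))
    (fstar : ℝ)
    (hf : fstar = -(a2 / 3) * s ^ 2 - (2 * b2 / 27) * s ^ 3 + (c2 / 9) * s ^ 4) :
    ∃ C : ℝ, 0 < C ∧
      ∀ x y : ℝ, x ^ 2 + y ^ 2 ≤ (2 / 3) * s ^ 2 →
        s / (3 * Real.sqrt 2) ≤ x → x ≤ s / Real.sqrt 2 →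
        (-(a2 / 2) + (c2 / 4) * (x ^ 2 + y ^ 2)) * (x ^ 2 + y ^ 2)
            - (b2 * Real.sqrt 6 / 18) * y * (y ^ 2 - 3 * x ^ 2) - fstar
          ≥ (1 / C) * (x - s / Real.sqrt 2) ^ 2 := by
  have hD : (0:ℝ) ≤ b2 ^ 2 + 24 * a2 * c2 := by positivity
  have hsqD : Real.sqrt (b2 ^ 2 + 24 * a2 * c2) ^ 2 = b2 ^ 2 + 24 * a2 * c2 :=
    Real.sq_sqrt hD
  have hsqDn : 0 ≤ Real.sqrt (b2 ^ 2 + 24 * a2 * c2) := Real.sqrt_nonneg _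
  have hspos : 0 < s := by
    rw [hs]
    exact div_pos (by linarith) (by linarith)
  have h4s : 4 * c2 * s = b2 + Real.sqrt (b2 ^ 2 + 24 * a2 * c2) := by
    rw [hs]; field_simp
  have hsq : (4 * c2 * s - b2) ^ 2 = b2 ^ 2 + 24 * a2 * c2 := by
    rw [show 4 * c2 * s - b2 = Real.sqrt (b2 ^ 2 + 24 * a2 * c2) by linarith, hsqD]
  have hz : c2 * (2 * c2 * s ^ 2 - b2 * s - 3 * a2) = 0 := by linear_combination hsq / 8
  have ha2 : a2 = (2 * c2 * s ^ 2 - b2 * s) / 3 := by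
    rcases mul_eq_zero.mp hz with h | h
    · exact absurd h hc.ne'
    · linarith
  have hbcs : b2 ≤ 2 * c2 * s := by nlinarith [mul_pos hspos hspos]
  have ht2 : Real.sqrt 2 ^ 2 = 2 := Real.sq_sqrt (by norm_num)
  have ht2p : (0:ℝ) < Real.sqrt 2 := Real.sqrt_pos.mpr (by norm_num)
  have ht6 : Real.sqrt 6 ^ 2 = 6 := Real.sq_sqrt (by norm_num)
  refine ⟨100 / (b2 * s), div_pos (by norm_num) (mul_pos hb hspos), ?_⟩
  intro x y hxy hx1 hx2
  have hC1 : 1 / (100 / (b2 * s)) = b2 * s / 100 := one_div_div _ _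
  rw [hC1]
  set t2 := Real.sqrt 2 with hdt2
  set t6 := Real.sqrt 6 with hdt6
  -- translated constraints
  have hu2 : (t2 * x) ^ 2 = 2 * x ^ 2 := by rw [mul_pow, ht2]
  have hv2 : (t6 * y) ^ 2 = 6 * y ^ 2 := by rw [mul_pow, ht6]
  have h2 : s ≤ 3 * (t2 * x) := by
    have := (div_le_iff₀ (by positivity : (0:ℝ) < 3 * t2)).mp hx1
    linarith [this]
  have h3 : t2 * x ≤ s := by
    have := (le_div_iff₀ ht2p).mp hx2
    linarith [this]
  have h1 : 3 * (t2 * x) ^ 2 + (t6 * y) ^ 2 ≤ 4 * s ^ 2 := by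
    rw [hu2, hv2]; linarith
  have K := key s (t2 * x) (t6 * y) hspos h1 h2 h3
  -- bridges
  have hZ : 3 * (t2 * x) ^ 2 + (t6 * y) ^ 2 - 4 * s ^ 2 = 6 * x ^ 2 + 6 * y ^ 2 - 4 * s ^ 2 := by
    rw [hu2, hv2]; ring
  have hY : (t6 * y + s) * (3 * (t2 * x) + 2 * s - t6 * y) * (3 * (t2 * x) + t6 * y - 2 * s)
      = 18 * s * (x ^ 2 + y ^ 2) + 6 * t6 * y * (3 * x ^ 2 - y ^ 2) - 4 * s ^ 3 := by
    linear_combination (9 * s * x ^ 2 + 9 * t6 * x ^ 2 * y) * ht2 + (3 * s * y ^ 2 - t6 * y ^ 3) * ht6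
  have hW : (t2 * x - s) ^ 2 = 2 * (x - s / t2) ^ 2 := by
    have hne : t2 ≠ 0 := ht2p.ne'
    have h0 : t2 * (x - s / t2) = t2 * x - s := by field_simp
    calc (t2 * x - s) ^ 2 = (t2 * (x - s / t2)) ^ 2 := by rw [h0]
      _ = t2 ^ 2 * (x - s / t2) ^ 2 := by ring
      _ = 2 * (x - s / t2) ^ 2 := by rw [ht2]
  rw [hZ, hY, hW] at K
  -- expression identity
  have hE : (-(a2 / 2) + (c2 / 4) * (x ^ 2 + y ^ 2)) * (x ^ 2 + y ^ 2)
      - (b2 * t6 / 18) * y * (y ^ 2 - 3 * x ^ 2) - fstar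
      = c2 / 144 * (6 * x ^ 2 + 6 * y ^ 2 - 4 * s ^ 2) ^ 2
        + b2 / 108 * (18 * s * (x ^ 2 + y ^ 2) + 6 * t6 * y * (3 * x ^ 2 - y ^ 2) - 4 * s ^ 3) := by
    rw [ha2, hf, ha2]; ring
  rw [ge_iff_le, hE, ← sub_nonneg]
  set P := (x - s / t2) ^ 2 with hPdef
  set Z := 6 * x ^ 2 + 6 * y ^ 2 - 4 * s ^ 2 with hZdef
  set Y := 18 * s * (x ^ 2 + y ^ 2) + 6 * t6 * y * (3 * x ^ 2 - y ^ 2) - 4 * s ^ 3 with hYdef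
  -- K : 108 * s ^ 2 * (2 * P) ≤ 75 * Z ^ 2 + 200 * s * Y
  have F1 : 0 ≤ b2 * (75 * Z ^ 2 + 200 * s * Y - 216 * s ^ 2 * P) :=
    mul_nonneg hb.le (by linarith)
  have F2 : 0 ≤ 75 * ((2 * c2 * s - b2) * Z ^ 2) :=
    mul_nonneg (by norm_num) (mul_nonneg (by linarith) (sq_nonneg Z))
  have hN : 0 ≤ b2 * (75 * Z ^ 2 + 200 * s * Y - 216 * s ^ 2 * P)
      + 75 * ((2 * c2 * s - b2) * Z ^ 2) := add_nonneg F1 F2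
  have hsne : s ≠ 0 := hspos.ne'
  have hEq : c2 / 144 * Z ^ 2 + b2 / 108 * Y - b2 * s / 100 * P
      = (b2 * (75 * Z ^ 2 + 200 * s * Y - 216 * s ^ 2 * P)
          + 75 * ((2 * c2 * s - b2) * Z ^ 2)) / (21600 * s) := by
    field_simp
    ring
  rw [hEq]
  exact div_nonneg hN (by linarith)
end LdGStmt16
end
end

section
/- Let a² ≥ 0, b² > 0, c² > 0, s₊ = (b² + √(b⁴ + 24a²c²))/(4c²), f_* = −(a²/3)s₊² − (2b²/27)s₊³ + (c²/9)s₊⁴, and h(x,y) = (−a²/2 + (c²/4)(x² + y²))(x² + y²) − (b²√6/18)·y·(y² − 3x²) − f_*. There exists C > 0, depending only on a², b², c², such that for every nonzero integer k and every R ≥ 1, the functions w̄₀(r) ≡ −s₊/√6 and w̄₁(r) = (s₊/√2)·min(r,1) satisfy ∫₀^R { (1/2)(w̄₀'(r)² + w̄₁'(r)²) + (k²/(2r²)) w̄₁(r)² + h(w̄₁(r), w̄₀(r)) } r dr ≤ C k² + (s₊² k²/4) ln R. -/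
/-!
On `(1, R]` the profile `w̄₁` is the constant `s/√2`, and `(w₁, w₀) = (s/√2, -s/√6)` is the
uniaxial tensor of order parameter `s`, whose bulk energy is exactly `f_*`, so `h` vanishes
there whatever `s` is. Only the angular term `k² s² / (4r)` survives, and it integrates to
`(s² k² / 4) ln R`. On `(0, 1)` the density is `(s²(1 + k²)/4 + h(w̄₁, w̄₀)) r`
with `h(w̄₁, w̄₀)` continuous on `[0, 1]`, hence bounded, which gives the `C k²` term.
-/

noncomputable section

open MeasureTheory Set

namespace LdGStmt17

theorem deriv_mul_min_one_of_lt (c : ℝ) {r : ℝ} (hr : r < 1) :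
    deriv (fun t => c * min t 1) r = c := by
  have hEq : EqOn (fun t => c * min t 1) (fun t => c * t) (Iio 1) := fun t (ht : t < 1) => by
    simp only [min_eq_left ht.le]
  rw [hEq.deriv isOpen_Iio hr]
  simp

theorem deriv_mul_min_one_of_one_lt (c : ℝ) {r : ℝ} (hr : 1 < r) :
    deriv (fun t => c * min t 1) r = 0 := by
  have hEq : EqOn (fun t => c * min t 1) (fun _ => c * 1) (Ioi 1) := fun t (ht : 1 < t) => by
    simp only [min_eq_right ht.le]
  rw [hEq.deriv isOpen_Ioi hr, deriv_const]

theorem integral_Ioc_eq_integral_add_mul_log {F g : ℝ → ℝ} {c R : ℝ} (hR : 1 ≤ R)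
    (hg : ContinuousOn g (Icc 0 1)) (hFg : EqOn F g (Ioo 0 1))
    (hF : EqOn F (fun r => c * r⁻¹) (Ioo 1 R)) :
    ∫ r in Ioc 0 R, F r = (∫ r in 0..1, g r) + c * Real.log R := by
  have hinv : ContinuousOn (fun r : ℝ => c * r⁻¹) (uIcc 1 R) := by
    rw [uIcc_of_le hR]
    exact continuousOn_const.mul <| continuousOn_inv₀.mono fun r hr => (one_pos.trans_le hr.1).ne'
  have hF₁ : IntervalIntegrable F volume 0 1 :=
    (hg.intervalIntegrable_of_Icc zero_le_one).congr_uIoo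
      (by rw [uIoo_of_le zero_le_one]; exact hFg.symm)
  have hF₂ : IntervalIntegrable F volume 1 R :=
    hinv.intervalIntegrable.congr_uIoo (by rw [uIoo_of_le hR]; exact hF.symm)
  rw [← intervalIntegral.integral_of_le (zero_le_one.trans hR),
    ← intervalIntegral.integral_add_adjacent_intervals hF₁ hF₂,
    intervalIntegral.integral_congr_Ioo_of_le zero_le_one hFg,
    intervalIntegral.integral_congr_Ioo_of_le hR hF, intervalIntegral.integral_const_mul,
    integral_inv_of_pos one_pos (one_pos.trans_le hR), div_one]

theorem integral_mul_id_le_of_le {φ : ℝ → ℝ} {M : ℝ} (hφ : ContinuousOn φ (Icc 0 1))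
    (hM : ∀ r ∈ Icc (0 : ℝ) 1, φ r ≤ M) :
    ∫ r in 0..1, φ r * r ≤ M / 2 := by
  calc ∫ r in 0..1, φ r * r
      ≤ ∫ r in 0..1, M * r :=
        intervalIntegral.integral_mono_on zero_le_one
          ((hφ.mul continuousOn_id).intervalIntegrable_of_Icc zero_le_one)
          ((continuous_const_mul M).intervalIntegrable 0 1)
          fun r hr => mul_le_mul_of_nonneg_right (hM r hr) hr.1
    _ = M / 2 := by rw [intervalIntegral.integral_const_mul, integral_id]; ring

/-- `h(w₁, w₀)` for the configuration `w₀ E₀ + w₁ E₁`; note the order of the arguments. -/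
def ldgPotential (a2 b2 c2 fstar x y : ℝ) : ℝ :=
  (-(a2 / 2) + (c2 / 4) * (x ^ 2 + y ^ 2)) * (x ^ 2 + y ^ 2)
    - (b2 * Real.sqrt 6 / 18) * y * (y ^ 2 - 3 * x ^ 2) - fstar

theorem ldgPotential_uniaxial_eq_zero (a2 b2 c2 s : ℝ) :
    ldgPotential a2 b2 c2 (-(a2 / 3) * s ^ 2 - (2 * b2 / 27) * s ^ 3 + (c2 / 9) * s ^ 4)
      (s / Real.sqrt 2) (-(s / Real.sqrt 6)) = 0 := by
  have h2 : Real.sqrt 2 ^ 2 = 2 := Real.sq_sqrt (by norm_num)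
  have h6 : Real.sqrt 6 ^ 2 = 6 := Real.sq_sqrt (by norm_num)
  have h6pos : Real.sqrt 6 ≠ 0 := by positivity
  unfold ldgPotential
  rw [neg_pow, div_pow, div_pow, h2, h6]
  field_simp
  ring

def radialEnergyDensity (a2 b2 c2 fstar k : ℝ) (w₀ w₁ : ℝ → ℝ) (r : ℝ) : ℝ :=
  ((1 / 2) * (deriv w₀ r ^ 2 + deriv w₁ r ^ 2) + k ^ 2 / (2 * r ^ 2) * w₁ r ^ 2
    + ldgPotential a2 b2 c2 fstar (w₁ r) (w₀ r)) * r

section TestProfile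

variable {a2 b2 c2 fstar k s : ℝ}

theorem radialEnergyDensity_of_mem_Ioo {r : ℝ} (hr : r ∈ Ioo 0 1) :
    radialEnergyDensity a2 b2 c2 fstar k (fun _ => -(s / Real.sqrt 6))
        (fun t => s / Real.sqrt 2 * min t 1) r
      = (s ^ 2 * (1 + k ^ 2) / 4
          + ldgPotential a2 b2 c2 fstar (s / Real.sqrt 2 * r) (-(s / Real.sqrt 6))) * r := by
  have h2 : Real.sqrt 2 ^ 2 = 2 := Real.sq_sqrt (by norm_num)
  have hr0 : r ≠ 0 := hr.1.ne'
  unfold radialEnergyDensity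
  beta_reduce
  rw [deriv_const, deriv_mul_min_one_of_lt _ hr.2, min_eq_left hr.2.le, mul_pow, div_pow, h2]
  field_simp
  ring

theorem radialEnergyDensity_of_one_lt
    (hf : fstar = -(a2 / 3) * s ^ 2 - (2 * b2 / 27) * s ^ 3 + (c2 / 9) * s ^ 4)
    {r : ℝ} (hr : 1 < r) :
    radialEnergyDensity a2 b2 c2 fstar k (fun _ => -(s / Real.sqrt 6))
        (fun t => s / Real.sqrt 2 * min t 1) r = s ^ 2 * k ^ 2 / 4 * r⁻¹ := by
  have h2 : Real.sqrt 2 ^ 2 = 2 := Real.sq_sqrt (by norm_num)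
  have hr0 : r ≠ 0 := (one_pos.trans hr).ne'
  unfold radialEnergyDensity
  beta_reduce
  rw [deriv_const, deriv_mul_min_one_of_one_lt _ hr, min_eq_right hr.le, mul_one, hf,
    ldgPotential_uniaxial_eq_zero, div_pow, h2]
  field_simp
  ring

end TestProfile

theorem stmt_17_general (a2 b2 c2 : ℝ) (s : ℝ) (fstar : ℝ)
    (hf : fstar = -(a2 / 3) * s ^ 2 - (2 * b2 / 27) * s ^ 3 + (c2 / 9) * s ^ 4) :
    ∃ C : ℝ, 0 < C ∧
      ∀ k : ℤ, k ≠ 0 → ∀ R : ℝ, 1 ≤ R →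
        (∫ r in Set.Ioc (0 : ℝ) R,
          ((1 / 2) * ((deriv (fun _ : ℝ => -(s / Real.sqrt 6)) r) ^ 2
              + (deriv (fun t : ℝ => s / Real.sqrt 2 * min t 1) r) ^ 2)
            + (k : ℝ) ^ 2 / (2 * r ^ 2) * (s / Real.sqrt 2 * min r 1) ^ 2
            + ((-(a2 / 2) + (c2 / 4) * ((s / Real.sqrt 2 * min r 1) ^ 2
                  + (-(s / Real.sqrt 6)) ^ 2))
                  * ((s / Real.sqrt 2 * min r 1) ^ 2 + (-(s / Real.sqrt 6)) ^ 2)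
                - (b2 * Real.sqrt 6 / 18) * (-(s / Real.sqrt 6))
                  * ((-(s / Real.sqrt 6)) ^ 2 - 3 * (s / Real.sqrt 2 * min r 1) ^ 2)
                - fstar)) * r)
          ≤ C * (k : ℝ) ^ 2 + s ^ 2 * (k : ℝ) ^ 2 / 4 * Real.log R := by
  set ψ : ℝ → ℝ := fun r =>
    ldgPotential a2 b2 c2 fstar (s / Real.sqrt 2 * r) (-(s / Real.sqrt 6))
  have hψ : Continuous ψ := by
    unfold ψ ldgPotential
    fun_prop
  obtain ⟨M, hM⟩ := (isCompact_Icc (a := (0 : ℝ)) (b := 1)).bddAbove_image hψ.continuousOn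
  refine ⟨s ^ 2 / 4 + |M| + 1, by positivity, fun k hk R hR => ?_⟩
  have hk2 : (1 : ℝ) ≤ (k : ℝ) ^ 2 := by
    exact_mod_cast (one_le_sq_iff_one_le_abs k).mpr (Int.one_le_abs hk)
  change ∫ r in Ioc 0 R, radialEnergyDensity a2 b2 c2 fstar k (fun _ => -(s / Real.sqrt 6))
    (fun t => s / Real.sqrt 2 * min t 1) r ≤ _
  set φ : ℝ → ℝ := fun r => s ^ 2 * (1 + (k : ℝ) ^ 2) / 4 + ψ r
  have hφ : Continuous φ := continuous_const.add hψ
  have hg : Continuous fun r => φ r * r := hφ.mul continuous_id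
  rw [integral_Ioc_eq_integral_add_mul_log hR hg.continuousOn
    (fun r hr => radialEnergyDensity_of_mem_Ioo hr)
    (fun r hr => radialEnergyDensity_of_one_lt hf hr.1)]
  have hφM : ∀ r ∈ Icc (0 : ℝ) 1, φ r ≤ s ^ 2 * (1 + (k : ℝ) ^ 2) / 4 + |M| := fun r hr =>
    add_le_add_right ((hM ⟨r, hr, rfl⟩).trans (le_abs_self M)) _
  have hbound := integral_mul_id_le_of_le hφ.continuousOn hφM
  have hC : (s ^ 2 * (1 + (k : ℝ) ^ 2) / 4 + |M|) / 2 ≤ (s ^ 2 / 4 + |M| + 1) * (k : ℝ) ^ 2 := by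
    nlinarith [mul_le_mul_of_nonneg_left hk2 (sq_nonneg s),
      mul_le_mul_of_nonneg_left hk2 (abs_nonneg M), abs_nonneg M]
  linarith

/-- Step 1 of Lemma 4.1 of the paper. With
`s₊ = (b² + √(b⁴+24a²c²))/(4c²)`, `f_*` the normalizing constant, and
`h(x,y) = (−a²/2 + (c²/4)(x²+y²))(x²+y²) − (b²√6/18)y(y²−3x²) − f_*`, there is `C > 0`
(depending only on `a²,b²,c²`) such that for every nonzero integer `k` and every `R ≥ 1`,
the test functions `w̄₀ ≡ −s₊/√6`, `w̄₁(r) = (s₊/√2)min(r,1)` satisfy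
`∫₀^R {½(w̄₀'² + w̄₁'²) + (k²/2r²)w̄₁² + h(w̄₁,w̄₀)} r dr ≤ Ck² + (s₊²k²/4) ln R`. -/
theorem stmt_17 (a2 b2 c2 : ℝ) (ha : 0 ≤ a2) (hb : 0 < b2) (hc : 0 < c2)
    (s : ℝ) (hs : s = (b2 + Real.sqrt (b2 ^ 2 + 24 * a2 * c2)) / (4 * c2))
    (fstar : ℝ)
    (hf : fstar = -(a2 / 3) * s ^ 2 - (2 * b2 / 27) * s ^ 3 + (c2 / 9) * s ^ 4) :
    ∃ C : ℝ, 0 < C ∧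
      ∀ k : ℤ, k ≠ 0 → ∀ R : ℝ, 1 ≤ R →
        (∫ r in Set.Ioc (0 : ℝ) R,
          ((1 / 2) * ((deriv (fun _ : ℝ => -(s / Real.sqrt 6)) r) ^ 2
              + (deriv (fun t : ℝ => s / Real.sqrt 2 * min t 1) r) ^ 2)
            + (k : ℝ) ^ 2 / (2 * r ^ 2) * (s / Real.sqrt 2 * min r 1) ^ 2
            + ((-(a2 / 2) + (c2 / 4) * ((s / Real.sqrt 2 * min r 1) ^ 2
                  + (-(s / Real.sqrt 6)) ^ 2))
                  * ((s / Real.sqrt 2 * min r 1) ^ 2 + (-(s / Real.sqrt 6)) ^ 2)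
                - (b2 * Real.sqrt 6 / 18) * (-(s / Real.sqrt 6))
                  * ((-(s / Real.sqrt 6)) ^ 2 - 3 * (s / Real.sqrt 2 * min r 1) ^ 2)
                - fstar)) * r)
          ≤ C * (k : ℝ) ^ 2 + s ^ 2 * (k : ℝ) ^ 2 / 4 * Real.log R :=
  stmt_17_general a2 b2 c2 s fstar hf

end LdGStmt17
end
end
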